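/- Let φ, ψ : (0,∞) → ℝ admit affine minorants and suppose ψ ∉ Φ₃ (i.e. either liminf_{x→∞} ψ(x)/x = +∞, or this liminf â_ψ is finite and liminf_{x→∞}(ψ(x) - â_ψ x) = -∞). If (φ(x) - ψ(x)) → +∞ as x → +∞, then (φ**(x) - ψ**(x)) → +∞ as x → +∞. -/

import Mathlib

open Filter Set Topology

/-- `φ` admits an affine minorant on `(0,∞)`. -/
def AffBdd (φ : ℝ → ℝ) : Prop := ∃ a b : ℝ, ∀ x > 0, a * x + b ≤ φ x

/-- The biconjugate of `φ` on `(0,∞)`: the pointwise supremum of all affine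
minorants of `φ` on `(0,∞)`, i.e. the largest convex minorant of `φ`. -/
noncomputable def biconj (φ : ℝ → ℝ) (x : ℝ) : ℝ :=
  sSup {y : ℝ | ∃ a b : ℝ, (∀ t > 0, a * t + b ≤ φ t) ∧ y = a * x + b}

/-!
If `ψ ∉ Φ₃`, an affine minorant of `ψ` that is nearly optimal at a far point `x` is very low on
any fixed interval `(0, R]`: either its slope is forced to be huge (`â_ψ = ∞`), or its slope is
close to `â_ψ` while it passes below a point where `ψ - â_ψ x` is very negative. Raised by `M + 1`
it therefore stays below `φ`, which exceeds `ψ + M + 1` far out and is bounded below on `(0, R]`;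
hence `φ** ≥ ψ** + M` eventually.
-/

/-- `ψ ∉ Φ₃`, with `â_ψ = liminf ψ x / x` taken in `EReal`. -/
def NotMemΦ₃ (ψ : ℝ → ℝ) : Prop :=
  liminf (fun x => ((ψ x / x : ℝ) : EReal)) atTop = ⊤ ∨
    ∃ a : ℝ, liminf (fun x => ((ψ x / x : ℝ) : EReal)) atTop = (a : EReal) ∧
      liminf (fun x => ((ψ x - a * x : ℝ) : EReal)) atTop = ⊥

def IsAffMinorant (φ : ℝ → ℝ) (a b : ℝ) : Prop := ∀ t > 0, a * t + b ≤ φ t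

lemma IsAffMinorant.le_biconj {φ : ℝ → ℝ} {a b x : ℝ} (h : IsAffMinorant φ a b) (hx : 0 < x) :
    a * x + b ≤ biconj φ x :=
  le_csSup ⟨φ x, by rintro y ⟨a', b', h', rfl⟩; exact h' x hx⟩ ⟨a, b, h, rfl⟩

lemma AffBdd.exists_isAffMinorant_lt_biconj {φ : ℝ → ℝ} (hφ : AffBdd φ) {y : ℝ} (x : ℝ)
    (hy : y < biconj φ x) : ∃ a b, IsAffMinorant φ a b ∧ y < a * x + b := by
  obtain ⟨a₀, b₀, h₀⟩ := hφ
  obtain ⟨_, ⟨a, b, hab, rfl⟩, hlt⟩ :=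
    exists_lt_of_lt_csSup (s := {y | ∃ a b, IsAffMinorant φ a b ∧ y = a * x + b})
      ⟨a₀ * x + b₀, a₀, b₀, h₀, rfl⟩ hy
  exact ⟨a, b, hab, hlt⟩

lemma AffBdd.exists_le_of_mem_Ioc {φ : ℝ → ℝ} (hφ : AffBdd φ) (R : ℝ) :
    ∃ m, ∀ t ∈ Ioc 0 R, m ≤ φ t := by
  obtain ⟨a, b, h⟩ := hφ
  refine ⟨b - |a| * R, fun t ⟨ht₀, htR⟩ => ?_⟩
  have : -|a| * R ≤ a * t := by nlinarith [neg_abs_le a, abs_nonneg a]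
  linarith [h t ht₀]

lemma AffBdd.sub_mul_id {φ : ℝ → ℝ} (hφ : AffBdd φ) (s : ℝ) : AffBdd fun t => φ t - s * t := by
  obtain ⟨a, b, h⟩ := hφ
  exact ⟨a - s, b, fun t ht => by linear_combination h t ht⟩

lemma AffBdd.exists_isAffMinorant_of_eventually_le {φ : ℝ → ℝ} (hφ : AffBdd φ) {s : ℝ}
    (hs : ∀ᶠ t in atTop, s * t ≤ φ t) : ∃ c, IsAffMinorant φ s c := by
  obtain ⟨R, hR⟩ := eventually_atTop.1 hs
  obtain ⟨m, hm⟩ := (hφ.sub_mul_id s).exists_le_of_mem_Ioc R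
  refine ⟨min 0 m, fun t ht => ?_⟩
  rcases le_or_gt R t with hRt | htR
  · linarith [hR t hRt, min_le_left 0 m]
  · linarith [hm t ⟨ht, htR.le⟩, min_le_right 0 m]

lemma AffBdd.exists_isAffMinorant_of_lt_liminf {φ : ℝ → ℝ} (hφ : AffBdd φ) {s : ℝ}
    (hs : (s : EReal) < liminf (fun x => ((φ x / x : ℝ) : EReal)) atTop) :
    ∃ c, IsAffMinorant φ s c := by
  refine hφ.exists_isAffMinorant_of_eventually_le ?_
  filter_upwards [eventually_lt_of_lt_liminf hs, eventually_gt_atTop 0] with t hst ht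
  exact ((lt_div_iff₀ ht).1 (EReal.coe_lt_coe_iff.1 hst)).le

/-- A nearly optimal minorant at a far point `x` stays below `φ T` yet reaches, at `x`, a line
of slope `s₁ > s` lying under `biconj φ`; so its slope exceeds `s`. -/
lemma AffBdd.eventually_slope_ge {φ : ℝ → ℝ} (hφ : AffBdd φ) {s : ℝ}
    (hs : (s : EReal) < liminf (fun x => ((φ x / x : ℝ) : EReal)) atTop) {T : ℝ} (hT : 0 < T) :
    ∀ᶠ x in atTop, ∀ a b, IsAffMinorant φ a b → biconj φ x - 1 ≤ a * x + b → s ≤ a := by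
  obtain ⟨s₁, hss₁, hs₁⟩ := EReal.lt_iff_exists_real_btwn.1 hs
  obtain ⟨c, hc⟩ := hφ.exists_isAffMinorant_of_lt_liminf hs₁
  have hgrow : Tendsto (fun x => (s₁ - s) * x) atTop atTop :=
    tendsto_id.const_mul_atTop (sub_pos.2 (EReal.coe_lt_coe_iff.1 hss₁))
  filter_upwards [hgrow.eventually_ge_atTop (φ T + 1 - c - s * T), eventually_gt_atTop T]
    with x hx hxT a b hab hnear
  have hbelow : a * T + b ≤ φ T := hab T hT
  have habove : s₁ * x + c ≤ biconj φ x := hc.le_biconj (hT.trans hxT)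
  have : s * (x - T) ≤ a * (x - T) := by linarith
  exact le_of_mul_le_mul_right this (sub_pos.2 hxT)

/-- The last inequality bounds `φ T - s (T - u)` by `C` for `u ∈ (0, R]`. -/
lemma NotMemΦ₃.exists_slope_point {φ : ℝ → ℝ} (hnot3 : NotMemΦ₃ φ)
    {R : ℝ} (hR : 0 ≤ R) (C : ℝ) :
    ∃ s T : ℝ, (s : EReal) < liminf (fun x => ((φ x / x : ℝ) : EReal)) atTop ∧ R < T ∧
      φ T - s * T + |s| * R ≤ C := by
  rcases hnot3 with htop | ⟨a, ha, hbot⟩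
  · refine ⟨max 0 (φ (R + 1) - C), R + 1, htop ▸ EReal.coe_lt_top _, by linarith, ?_⟩
    rw [abs_of_nonneg (le_max_left _ _)]
    linarith [le_max_right 0 (φ (R + 1) - C)]
  · -- `s = a - 1 / T` for a point `T` far out where `φ T - a T` is very negative.
    have hfreq : ∃ᶠ t in atTop, ((φ t - a * t : ℝ) : EReal) < ((C - 1 - (|a| + 1) * R : ℝ)) :=
      frequently_lt_of_liminf_lt (by isBoundedDefault) (hbot ▸ EReal.bot_lt_coe _)
    obtain ⟨T, hlow, hT⟩ := (hfreq.and_eventually (eventually_ge_atTop (R + 1))).exists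
    have hlow : φ T - a * T < C - 1 - (|a| + 1) * R := EReal.coe_lt_coe_iff.1 hlow
    have hT₀ : 0 < T := by linarith
    have hinv : T⁻¹ ≤ 1 := inv_le_one_of_one_le₀ (by linarith)
    refine ⟨a - T⁻¹, T, ha ▸ EReal.coe_lt_coe_iff.2 (sub_lt_self a (inv_pos.2 hT₀)),
      by linarith, ?_⟩
    have habs : |a - T⁻¹| * R ≤ (|a| + 1) * R := by
      gcongr
      calc |a - T⁻¹| ≤ |a| + |T⁻¹| := abs_sub _ _
        _ ≤ |a| + 1 := by rw [abs_of_pos (inv_pos.2 hT₀)]; linarith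
    have hTinv : (a - T⁻¹) * T = a * T - 1 := by field_simp
    linarith

lemma NotMemΦ₃.eventually_isAffMinorant_le {ψ : ℝ → ℝ} (hnot3 : NotMemΦ₃ ψ) (hψ : AffBdd ψ)
    {R : ℝ} (hR : 0 ≤ R) (C : ℝ) :
    ∀ᶠ x in atTop, ∀ a b, IsAffMinorant ψ a b → biconj ψ x - 1 ≤ a * x + b →
      ∀ u ∈ Ioc 0 R, a * u + b ≤ C := by
  obtain ⟨s, T, hs, hRT, hC⟩ := hnot3.exists_slope_point hR C
  filter_upwards [hψ.eventually_slope_ge hs (hR.trans_lt hRT)] with x hx a b hab hnear u ⟨hu₀, huR⟩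
  have hbelow : a * T + b ≤ ψ T := hab T (hR.trans_lt hRT)
  have hslope : s * (T - u) ≤ a * (T - u) :=
    mul_le_mul_of_nonneg_right (hx a b hab hnear) (by linarith)
  have hsu : s * u ≤ |s| * R :=
    (mul_le_mul_of_nonneg_right (le_abs_self s) hu₀.le).trans
      (mul_le_mul_of_nonneg_left huR (abs_nonneg s))
  linarith

theorem stmt_17 (φ ψ : ℝ → ℝ) (hφ : AffBdd φ) (hψ : AffBdd ψ)
    (hnot3 : Filter.liminf (fun x => ((ψ x / x : ℝ) : EReal)) atTop = ⊤ ∨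
      ∃ a : ℝ, Filter.liminf (fun x => ((ψ x / x : ℝ) : EReal)) atTop = (a : EReal) ∧
        Filter.liminf (fun x => ((ψ x - a * x : ℝ) : EReal)) atTop = ⊥)
    (hlim : Tendsto (fun x => φ x - ψ x) atTop atTop) :
    Tendsto (fun x => biconj φ x - biconj ψ x) atTop atTop := by
  refine tendsto_atTop.2 fun M => ?_
  obtain ⟨R₀, hR₀⟩ := eventually_atTop.1 (hlim.eventually_ge_atTop (M + 1))
  set R := max R₀ 0
  obtain ⟨m, hm⟩ := hφ.exists_le_of_mem_Ioc R
  filter_upwards [NotMemΦ₃.eventually_isAffMinorant_le hnot3 hψ (le_max_right R₀ 0) (m - (M + 1)),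
    eventually_gt_atTop 0] with x hlow hx
  obtain ⟨a, b, hab, hnear⟩ := hψ.exists_isAffMinorant_lt_biconj x (sub_one_lt (biconj ψ x))
  have hφab : IsAffMinorant φ a (b + (M + 1)) := fun t ht => by
    rcases le_or_gt R t with hRt | htR
    · linarith [hab t ht, hR₀ t ((le_max_left R₀ 0).trans hRt)]
    · linarith [hlow a b hab hnear.le t ⟨ht, htR.le⟩, hm t ⟨ht, htR.le⟩]
  linarith [hφab.le_biconj hx]
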